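/- Let θ ∈ ℂ and let K be an imaginary quadratic field regarded as a subfield of ℂ with ring of integers 𝓞_K. Suppose k₀, ℓ₀ > 0 and E, Q > 1 are real numbers with 2ℓ₀E ≥ 1, and that for each integer r ≥ 0 there are p_r, q_r ∈ 𝓞_K satisfying p_r·q_{r+1} ≠ p_{r+1}·q_r, |q_r| < k₀·Q^r and |q_r·θ − p_r| ≤ ℓ₀·E^{−r}. Put κ = log Q / log E and c = 2k₀·Q·(2ℓ₀E)^κ. Then for all p, q ∈ 𝓞_K with q ≠ 0, we have |θ − p/q| > 1/(c·|q|^{κ+1}). -/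

import Mathlib

open Finset MeasureTheory

noncomputable section

/-- Coefficient of `z^k` in `X_{m,n,r}(z) = ₂F₁(-r, -r-m/n; 1-m/n; z)`. -/
def Xcoef (m n r k : ℕ) : ℚ :=
  (r.choose k : ℚ) * ∏ j ∈ Finset.range k, ((((r : ℚ) - j) * n + m) / (((j : ℚ) + 1) * n - m))

/-- `X_{m,n,r}` as a function on `ℂ`. -/
def Xfun (m n r : ℕ) (z : ℂ) : ℂ :=
  ∑ k ∈ Finset.range (r + 1), (Xcoef m n r k : ℂ) * z ^ k

/-- `Y_{m,n,r}(z) = z^r · X_{m,n,r}(1/z)` as a polynomial function on `ℂ`. -/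
def Yfun (m n r : ℕ) (z : ℂ) : ℂ :=
  ∑ k ∈ Finset.range (r + 1), (Xcoef m n r k : ℂ) * z ^ (r - k)

/-- `X_{m,n,r}` as a function on `ℝ`. -/
def XfunR (m n r : ℕ) (z : ℝ) : ℝ :=
  ∑ k ∈ Finset.range (r + 1), (Xcoef m n r k : ℝ) * z ^ k

/-- `X_{m,n,r}` as a polynomial over `ℂ`. -/
def XpolyC (m n r : ℕ) : Polynomial ℂ :=
  ∑ k ∈ Finset.range (r + 1), Polynomial.C (Xcoef m n r k : ℂ) * Polynomial.X ^ k

/-- `D_{m,n,r}`: the least positive integer clearing the denominators of `X_{m,n,r}`. -/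
def Dden (m n r : ℕ) : ℕ :=
  sInf {D : ℕ | 0 < D ∧ ∀ k : ℕ, ∃ z : ℤ, (D : ℚ) * Xcoef m n r k = (z : ℚ)}

/-- The squarefree core of an integer `d`: the unique squarefree integer such that
`d/core d` is a square. -/
def intCore (d : ℤ) : ℤ :=
  d.sign * ∏ p ∈ d.natAbs.primeFactors, (p : ℤ) ^ (d.natAbs.factorization p % 2)

/-- The polynomial `X_{m,n,r}(1 - √d · z)` over `ℂ` (principal square root of `d`). -/
def Xshift (d : ℤ) (m n r : ℕ) : Polynomial ℂ :=
  ∑ k ∈ Finset.range (r + 1), Polynomial.C (Xcoef m n r k : ℂ) *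
    (1 - Polynomial.C ((d : ℂ) ^ (1/2 : ℂ)) * Polynomial.X) ^ k

/-- `N_{d,m,n,r}`: the largest positive integer `N` such that
`(D_{m,n,r}/N)·X_{m,n,r}(1-√d·z)` has all coefficients in `ℤ[√core d]`. -/
def Nden (d : ℤ) (m n r : ℕ) : ℕ :=
  sSup {N : ℕ | 0 < N ∧ ∀ k : ℕ, ∃ u v : ℤ,
    ((Dden m n r : ℂ) / (N : ℂ)) * (Xshift d m n r).coeff k
      = (u : ℂ) + (v : ℂ) * ((intCore d : ℂ) ^ (1/2 : ℂ))}

/-- `𝒩_{d,n} = ∏_{p | n} p^{min(v_p(d)/2, v_p(n)+1/(p-1))}`. -/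
def calN (d : ℤ) (n : ℕ) : ℝ :=
  ∏ p ∈ n.primeFactors,
    (p : ℝ) ^ (min ((d.natAbs.factorization p : ℝ) / 2)
      ((n.factorization p : ℝ) + 1 / ((p : ℝ) - 1)))

/-- `μ_n = ∏_{p | n} p^{1/(p-1)}`. -/
def muN (n : ℕ) : ℝ := ∏ p ∈ n.primeFactors, (p : ℝ) ^ (1 / ((p : ℝ) - 1))

/-- The Gamma-function factor appearing in the admissibility condition. -/
def gammaMax (m n r : ℕ) : ℝ :=
  max (max 1 (Real.Gamma (1 - (m : ℝ) / n) * r.factorial /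
      Real.Gamma ((r : ℝ) + 1 - (m : ℝ) / n)))
    ((n : ℝ) * Real.Gamma ((r : ℝ) + 1 + (m : ℝ) / n) /
      ((m : ℝ) * Real.Gamma ((m : ℝ) / n) * r.factorial))

/-- `(C, D)` is admissible for `(d, n)`. -/
def Admissible (d : ℤ) (n : ℕ) (C D : ℝ) : Prop :=
  ∀ m r : ℕ, 0 < m → 2 * m < n → Nat.Coprime m n →
    gammaMax m n r * (Dden m n r : ℝ) / (Nden d m n r : ℝ) < C * (D / calN d n) ^ r

/-- `K` is an imaginary quadratic field `ℚ(√-t)` viewed as a subfield of `ℂ`. -/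
def IsImagQuadratic (K : Subfield ℂ) : Prop :=
  ∃ t : ℕ, 0 < t ∧ Squarefree t ∧
    K = Subfield.closure {Complex.I * (Real.sqrt t : ℂ)}

/-- Pochhammer symbol `(x)_k = x(x+1)⋯(x+k-1)` over `ℂ`. -/
def poch (x : ℂ) (k : ℕ) : ℂ := ∏ j ∈ Finset.range k, (x + j)

/-- The remainder function `R_{m,n,r}(z)`. -/
def Rfun (m n r : ℕ) (z : ℂ) : ℂ :=
  ((∏ j ∈ Finset.range (r + 1), ((j : ℂ) + (m : ℂ) / n)) /
      ∏ j ∈ Finset.range (r + 1), ((r : ℂ) + 1 + j)) *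
    ∑' k : ℕ, poch ((r : ℂ) + 1 - (m : ℂ) / n) k * poch ((r : ℂ) + 1) k /
      (poch (2 * (r : ℂ) + 2) k * (k.factorial : ℂ)) * (1 - z) ^ k


/-! Nonzero algebraic integers of an imaginary quadratic field have absolute value at least 1,
since `x * conj x` is then a positive rational integer.

Given `P / Q'`, choose `r` with `2ℓ₀|Q'| ≤ E^r ≤ 2ℓ₀E|Q'|`. Since consecutive approximations are
independent, `q_s P - p_s Q'` is nonzero, hence of absolute value at least 1, for some
`s ∈ {r, r + 1}`. Writing `q_s P - p_s Q' = Q'(q_s θ - p_s) - q_s Q'(θ - P/Q')`, the first term is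
at most `1/2` by the choice of `r`, so `|q_s| |Q'| |θ - P/Q'| ≥ 1/2`, while
`|q_s| < k₀ Q^(r+1) = k₀ Q (E^r)^κ ≤ (c/2) |Q'|^κ`. -/

open Complex ComplexConjugate

lemma one_le_norm_of_isIntegral_of_normSq_eq_ratCast {x : ℂ} (hx : IsIntegral ℤ x) (h0 : x ≠ 0)
    {r : ℚ} (hr : normSq x = r) : 1 ≤ ‖x‖ := by
  have hrI : IsIntegral ℤ r := by
    have hxx : IsIntegral ℤ (x * conj x) := hx.mul (hx.map (starRingEnd ℂ).toIntAlgHom)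
    rw [mul_conj, hr, ofReal_ratCast, ← eq_ratCast (algebraMap ℚ ℂ)] at hxx
    exact (isIntegral_algebraMap_iff (algebraMap ℚ ℂ).injective).mp hxx
  obtain ⟨n, rfl⟩ := IsIntegrallyClosed.isIntegral_iff.mp hrI
  have hn : (0 : ℝ) < n := by simpa [hr] using normSq_pos.mpr h0
  have hn1 : (1 : ℝ) ≤ n := by exact_mod_cast (show (0 : ℤ) < n by exact_mod_cast hn)
  rw [← one_le_sq_iff₀ (norm_nonneg x), ← normSq_eq_norm_sq, hr]
  simpa using hn1

lemma I_mul_sqrt_mul_self {t : ℝ} (ht : 0 ≤ t) : I * √t * (I * √t) = -t := by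
  rw [mul_mul_mul_comm, I_mul_I, ← ofReal_mul, Real.mul_self_sqrt ht]
  ring

def imagQuadSubfield (t : ℚ) (ht : 0 < t) : Subfield ℂ where
  carrier := {z | ∃ a b : ℚ, z = a + b * (I * √(t : ℝ))}
  zero_mem' := ⟨0, 0, by simp⟩
  one_mem' := ⟨1, 0, by simp⟩
  add_mem' := by
    rintro _ _ ⟨a, b, rfl⟩ ⟨c, d, rfl⟩
    exact ⟨a + c, b + d, by push_cast; ring⟩
  neg_mem' := by
    rintro _ ⟨a, b, rfl⟩
    exact ⟨-a, -b, by push_cast; ring⟩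
  mul_mem' := by
    rintro _ _ ⟨a, b, rfl⟩ ⟨c, d, rfl⟩
    refine ⟨a * c - b * d * t, a * d + b * c, ?_⟩
    push_cast
    linear_combination (b : ℂ) * d * I_mul_sqrt_mul_self (t := t) (by positivity)
  inv_mem' := by
    rintro _ ⟨a, b, rfl⟩
    by_cases hN : a ^ 2 + t * b ^ 2 = 0
    · obtain ⟨ha, hb⟩ := (add_eq_zero_iff_of_nonneg (sq_nonneg a) (by positivity)).mp hN
      have hb' := pow_eq_zero_iff two_ne_zero |>.mp <| (mul_eq_zero.mp hb).resolve_left ht.ne'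
      exact ⟨0, 0, by simp [pow_eq_zero_iff two_ne_zero |>.mp ha, hb']⟩
    refine ⟨a / (a ^ 2 + t * b ^ 2), -b / (a ^ 2 + t * b ^ 2), ?_⟩
    have hNC : (a : ℂ) ^ 2 + t * b ^ 2 ≠ 0 := by exact_mod_cast hN
    refine inv_eq_of_mul_eq_one_right ?_
    push_cast
    rw [div_eq_mul_inv, div_eq_mul_inv]
    linear_combination (-(b : ℂ) ^ 2 * ((a : ℂ) ^ 2 + t * b ^ 2)⁻¹) *
      I_mul_sqrt_mul_self (t := t) (by positivity) + mul_inv_cancel₀ hNC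

lemma exists_normSq_eq_ratCast_of_mem_imagQuadSubfield {t : ℚ} {ht : 0 < t} {x : ℂ}
    (hx : x ∈ imagQuadSubfield t ht) :
    ∃ r : ℚ, normSq x = r := by
  obtain ⟨a, b, rfl⟩ := hx
  refine ⟨a ^ 2 + t * b ^ 2, ?_⟩
  rw [show (a : ℂ) + b * (I * √(t : ℝ)) = ((a : ℝ) : ℂ) + ((b * √(t : ℝ) : ℝ) : ℂ) * I by
    push_cast; ring, normSq_add_mul_I, mul_pow, Real.sq_sqrt (by positivity)]
  push_cast; ring

lemma one_le_norm_of_isImagQuadratic {K : Subfield ℂ} (hK : IsImagQuadratic K) {x : ℂ}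
    (hxK : x ∈ K) (hx : IsIntegral ℤ x) (h0 : x ≠ 0) : 1 ≤ ‖x‖ := by
  obtain ⟨t, ht, -, rfl⟩ := hK
  have hle : Subfield.closure {I * (√t : ℂ)} ≤ imagQuadSubfield t (by exact_mod_cast ht) :=
    Subfield.closure_le.mpr <| Set.singleton_subset_iff.mpr ⟨0, 1, by simp⟩
  obtain ⟨r, hr⟩ := exists_normSq_eq_ratCast_of_mem_imagQuadSubfield (hle hxK)
  exact one_le_norm_of_isIntegral_of_normSq_eq_ratCast hx h0 hr

lemma exists_pow_mem_Icc {E y : ℝ} (hE : 1 < E) (hy : 1 ≤ y * E) :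
    ∃ r : ℕ, y ≤ E ^ r ∧ E ^ r ≤ y * E := by
  obtain ⟨r, hle, hlt⟩ := exists_nat_pow_near hy hE
  rw [pow_succ] at hlt
  exact ⟨r, (mul_lt_mul_iff_left₀ (by linarith)).mp hlt |>.le, hle⟩

lemma sub_ne_zero_or_sub_ne_zero_of_mul_ne_mul {R : Type*} [CommRing R] [NoZeroDivisors R]
    {p₁ q₁ p₂ q₂ P Q : R} (hW : p₁ * q₂ ≠ p₂ * q₁) (hQ : Q ≠ 0) :
    q₁ * P - p₁ * Q ≠ 0 ∨ q₂ * P - p₂ * Q ≠ 0 := by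
  by_contra! h
  have hQW : Q * (p₁ * q₂ - p₂ * q₁) = 0 := by linear_combination q₁ * h.2 - q₂ * h.1
  exact hW <| sub_eq_zero.mp <| (mul_eq_zero.mp hQW).resolve_left hQ

lemma norm_mul_sub_mul_le {𝕜 : Type*} [NormedField 𝕜] (θ P Q a b : 𝕜) (hQ : Q ≠ 0) :
    ‖b * P - a * Q‖ ≤ ‖b‖ * ‖Q‖ * ‖θ - P / Q‖ + ‖Q‖ * ‖b * θ - a‖ := by
  have h : b * P - a * Q = -(b * Q * (θ - P / Q)) + Q * (b * θ - a) := by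
    field_simp
    ring
  calc ‖b * P - a * Q‖ ≤ ‖-(b * Q * (θ - P / Q))‖ + ‖Q * (b * θ - a)‖ := h ▸ norm_add_le _ _
    _ = _ := by rw [norm_neg, norm_mul, norm_mul, norm_mul]

lemma pow_eq_pow_rpow_logb {E Q : ℝ} (hE : 1 < E) (hQ : 0 < Q) (n : ℕ) :
    Q ^ n = (E ^ n) ^ Real.logb E Q := by
  rw [← Real.rpow_pow_comm (by linarith), Real.rpow_logb (by linarith) hE.ne' hQ]

theorem one_div_lt_norm_sub_div_of_approximations {𝕜 : Type*} [NormedField 𝕜] {θ : 𝕜}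
    {k₀ ℓ₀ E Q : ℝ} (hk₀ : 0 ≤ k₀) (hE : 1 < E) (hQ : 1 < Q) (hℓE : 1 ≤ 2 * ℓ₀ * E)
    {p q : ℕ → 𝕜} (hW : ∀ r, p r * q (r + 1) ≠ p (r + 1) * q r)
    (hqbd : ∀ r, ‖q r‖ < k₀ * Q ^ r) (happ : ∀ r, ‖q r * θ - p r‖ ≤ ℓ₀ / E ^ r)
    {P Q' : 𝕜} (hQ' : 1 ≤ ‖Q'‖)
    (hgap : ∀ r, q r * P - p r * Q' ≠ 0 → 1 ≤ ‖q r * P - p r * Q'‖) :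
    1 / (2 * k₀ * Q * (2 * ℓ₀ * E) ^ Real.logb E Q * ‖Q'‖ ^ (Real.logb E Q + 1)) <
      ‖θ - P / Q'‖ := by
  set κ := Real.logb E Q
  set N := ‖Q'‖
  set D := ‖θ - P / Q'‖
  have hN : 0 < N := by linarith
  have hQ'0 : Q' ≠ 0 := norm_pos_iff.mp hN
  have hE0 : 0 < E := by linarith
  have hℓ₀ : 0 < ℓ₀ := by nlinarith
  have hκ : 0 ≤ κ := (Real.logb_pos hE hQ).le
  obtain ⟨r, hr, hr'⟩ := exists_pow_mem_Icc hE (y := 2 * ℓ₀ * N) (by nlinarith)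
  obtain ⟨s, hrs, hsr, hgap_s⟩ : ∃ s, r ≤ s ∧ s ≤ r + 1 ∧ 1 ≤ ‖q s * P - p s * Q'‖ := by
    rcases sub_ne_zero_or_sub_ne_zero_of_mul_ne_mul (hW r) hQ'0 with h | h
    exacts [⟨r, le_rfl, r.le_succ, hgap r h⟩, ⟨r + 1, r.le_succ, le_rfl, hgap (r + 1) h⟩]
  have happ_s : N * ‖q s * θ - p s‖ ≤ 1 / 2 := calc
    N * ‖q s * θ - p s‖ ≤ N * (ℓ₀ / E ^ r) := by
      gcongr
      exact (happ s).trans (div_le_div_of_nonneg_left hℓ₀.le (by positivity)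
        (pow_le_pow_right₀ hE.le hrs))
    _ ≤ N * (ℓ₀ / (2 * ℓ₀ * N)) := by gcongr
    _ = 1 / 2 := by field_simp
  have hqs : ‖q s‖ < k₀ * Q * (2 * ℓ₀ * E) ^ κ * N ^ κ := calc
    ‖q s‖ < k₀ * Q ^ s := hqbd s
    _ ≤ k₀ * (Q * Q ^ r) := by
      gcongr
      exact (pow_le_pow_right₀ hQ.le hsr).trans_eq (pow_succ' Q r)
    _ ≤ k₀ * (Q * (2 * ℓ₀ * E * N) ^ κ) := by
      rw [pow_eq_pow_rpow_logb hE (by linarith)]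
      gcongr
      linarith
    _ = k₀ * Q * (2 * ℓ₀ * E) ^ κ * N ^ κ := by
      rw [Real.mul_rpow (by positivity) hN.le]; ring
  have hhalf : 1 / 2 ≤ ‖q s‖ * N * D := by
    linarith [norm_mul_sub_mul_le θ P Q' (p s) (q s) hQ'0]
  have hD : 0 < D := by
    by_contra! h
    nlinarith [norm_nonneg (q s), mul_nonneg (norm_nonneg (q s)) hN.le]
  have hlt : 1 < 2 * k₀ * Q * (2 * ℓ₀ * E) ^ κ * N ^ (κ + 1) * D := by
    rw [Real.rpow_add_one hN.ne']
    nlinarith [mul_pos hN hD]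
  rw [div_lt_iff₀ (by nlinarith)]
  linarith

theorem stmt_3_general (θ : ℂ) (K : Subfield ℂ) (hK : IsImagQuadratic K)
    (k₀ ℓ₀ E Q : ℝ) (hk₀ : 0 < k₀) (hE : 1 < E) (hQ : 1 < Q)
    (hℓE : 1 ≤ 2 * ℓ₀ * E)
    (p q : ℕ → ℂ)
    (hpK : ∀ r, p r ∈ K) (hqK : ∀ r, q r ∈ K)
    (hpI : ∀ r, IsIntegral ℤ (p r)) (hqI : ∀ r, IsIntegral ℤ (q r))
    (hW : ∀ r, p r * q (r + 1) ≠ p (r + 1) * q r)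
    (hqbd : ∀ r, ‖q r‖ < k₀ * Q ^ r)
    (happ : ∀ r, ‖q r * θ - p r‖ ≤ ℓ₀ / E ^ r)
    (κ c : ℝ) (hκ : κ = Real.log Q / Real.log E)
    (hc : c = 2 * k₀ * Q * (2 * ℓ₀ * E) ^ κ) :
    ∀ P Q' : ℂ, P ∈ K → Q' ∈ K → IsIntegral ℤ P → IsIntegral ℤ Q' → Q' ≠ 0 →
      1 / (c * ‖Q'‖ ^ (κ + 1)) < ‖θ - P / Q'‖ := by
  intro P Q' hPK hQK hPI hQI hQ'0
  subst hκ hc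
  refine one_div_lt_norm_sub_div_of_approximations hk₀.le hE hQ hℓE hW hqbd happ
    (one_le_norm_of_isImagQuadratic hK hQK hQI hQ'0) fun r hr => ?_
  have hmem : q r * P - p r * Q' ∈ K := K.sub_mem (K.mul_mem (hqK r) hPK) (K.mul_mem (hpK r) hQK)
  exact one_le_norm_of_isImagQuadratic hK hmem (((hqI r).mul hPI).sub ((hpI r).mul hQI)) hr

theorem stmt_3 (θ : ℂ) (K : Subfield ℂ) (hK : IsImagQuadratic K)
    (k₀ ℓ₀ E Q : ℝ) (hk₀ : 0 < k₀) (hℓ₀ : 0 < ℓ₀) (hE : 1 < E) (hQ : 1 < Q)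
    (hℓE : 1 ≤ 2 * ℓ₀ * E)
    (p q : ℕ → ℂ)
    (hpK : ∀ r, p r ∈ K) (hqK : ∀ r, q r ∈ K)
    (hpI : ∀ r, IsIntegral ℤ (p r)) (hqI : ∀ r, IsIntegral ℤ (q r))
    (hW : ∀ r, p r * q (r + 1) ≠ p (r + 1) * q r)
    (hqbd : ∀ r, ‖q r‖ < k₀ * Q ^ r)
    (happ : ∀ r, ‖q r * θ - p r‖ ≤ ℓ₀ / E ^ r)
    (κ c : ℝ) (hκ : κ = Real.log Q / Real.log E)
    (hc : c = 2 * k₀ * Q * (2 * ℓ₀ * E) ^ κ) :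
    ∀ P Q' : ℂ, P ∈ K → Q' ∈ K → IsIntegral ℤ P → IsIntegral ℤ Q' → Q' ≠ 0 →
      1 / (c * ‖Q'‖ ^ (κ + 1)) < ‖θ - P / Q'‖ :=
  stmt_3_general θ K hK k₀ ℓ₀ E Q hk₀ hE hQ hℓE p q hpK hqK hpI hqI hW hqbd happ κ c hκ hc
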